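/- arXiv:1910.03490 — 10 statements merged into one kernel-verified Lean document; each statement's English description precedes it below -/
import Mathlib

section
/- Let W satisfy W(n) = r·W(n-1) + s·W(n-2) + t·W(n-3) for n ≥ 3. If (r+s+t-1)(r-s+t+1) ≠ 0, then for all n ≥ 0, ∑_{k=0}^{n} W(2k) = ((1-s)·W(2n+2) + (t+rs)·W(2n+1) + (t²+rt)·W(2n) + (s-1)·W(2) + (-t-rs)·W(1) + (r² - s² + rt + 2s - 1)·W(0)) / ((r+s+t-1)(r-s+t+1)). -/
/-!
With `F n = (1-s) W(2n+2) + (t+rs) W(2n+1) + (t²+rt) W(2n)`, two applications of the recurrence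
give `F (n+1) - F n = (r+s+t-1)(r-s+t+1) W(2n+2)`, so the even-indexed sum telescopes.
-/

section EvenSum

variable {R : Type*} [CommRing R] (W : ℕ → R) (r s t : R)

def evenSumPotential (n : ℕ) : R :=
  (1 - s) * W (2 * n + 2) + (t + r * s) * W (2 * n + 1) + (t ^ 2 + r * t) * W (2 * n)

variable {W r s t}

theorem evenSumPotential_succ_sub (hrec : ∀ n, W (n + 3) = r * W (n + 2) + s * W (n + 1) + t * W n)
    (n : ℕ) :
    evenSumPotential W r s t (n + 1) - evenSumPotential W r s t n =
      (r + s + t - 1) * (r - s + t + 1) * W (2 * n + 2) := by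
  have h₄ : W (2 * n + 4) = r * W (2 * n + 3) + s * W (2 * n + 2) + t * W (2 * n + 1) :=
    hrec (2 * n + 1)
  have h₃ : W (2 * n + 3) = r * W (2 * n + 2) + s * W (2 * n + 1) + t * W (2 * n) := hrec (2 * n)
  simp only [evenSumPotential, mul_add, mul_one]
  linear_combination (1 - s) * h₄ + (r + t) * h₃

theorem mul_sum_range_even (hrec : ∀ n, W (n + 3) = r * W (n + 2) + s * W (n + 1) + t * W n)
    (n : ℕ) :
    (r + s + t - 1) * (r - s + t + 1) * ∑ k ∈ Finset.range (n + 1), W (2 * k) =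
      evenSumPotential W r s t n - evenSumPotential W r s t 0 +
        (r + s + t - 1) * (r - s + t + 1) * W 0 := by
  rw [Finset.sum_range_succ', mul_add, Finset.mul_sum, ← Finset.sum_range_sub]
  simp only [evenSumPotential_succ_sub hrec, mul_add, mul_one, mul_zero]

end EvenSum

theorem sum_gen_tribonacci_even (W : ℕ → ℂ) (r s t : ℂ)
    (hrec : ∀ n, 3 ≤ n → W n = r * W (n-1) + s * W (n-2) + t * W (n-3))
    (h : (r+s+t-1) * (r-s+t+1) ≠ 0) :
    ∀ n : ℕ, ∑ k ∈ Finset.range (n+1), W (2*k) =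
      ((1-s) * W (2*n+2) + (t+r*s) * W (2*n+1) + (t^2+r*t) * W (2*n)
        + (s-1) * W 2 + (-t-r*s) * W 1 + (r^2 - s^2 + r*t + 2*s - 1) * W 0)
      / ((r+s+t-1) * (r-s+t+1)) := by
  intro n
  have hrec' : ∀ n, W (n + 3) = r * W (n + 2) + s * W (n + 1) + t * W n := fun n ↦ by
    simpa using hrec (n + 3) (by omega)
  rw [eq_div_iff h, mul_comm, mul_sum_range_even hrec', evenSumPotential, evenSumPotential]
  ring
end

section
/- Let W satisfy W(n) = r·W(n-1) + s·W(n-2) + t·W(n-3) for n ≥ 3. If (r+s+t-1)(r-s+t+1) ≠ 0, then for all n ≥ 0, ∑_{k=0}^{n} W(2k+1) = ((r+t)·W(2n+2) + (s - s² + t² + rt)·W(2n+1) + (t - st)·W(2n) + (-r-t)·W(2) + (r² + rt + s - 1)·W(1) + (st - t)·W(0)) / ((r-s+t+1)(r+s+t-1)). -/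
/-!
With `D = (r-s+t+1)(r+s+t-1)` and the potential
`F n = (r+t) W(2n+2) + (s-s²+t²+rt) W(2n+1) + (t-st) W(2n)`, two applications of the
recurrence give `F (n+1) - F n = D · W(2n+3)`. Hence `D · ∑_{k ≤ n} W(2k+1)` telescopes to
`D · W 1 + F n - F 0`, which is the claimed formula multiplied out.
-/

namespace GenTribonacci

open Finset

variable {R : Type*} [CommRing R] (W : ℕ → R) (r s t : R)

def oddSumPotential (n : ℕ) : R :=
  (r+t) * W (2*n+2) + (s - s^2 + t^2 + r*t) * W (2*n+1) + (t - s*t) * W (2*n)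

theorem oddSumPotential_succ_sub (hrec : ∀ n, W (n+3) = r * W (n+2) + s * W (n+1) + t * W n)
    (n : ℕ) :
    oddSumPotential W r s t (n+1) - oddSumPotential W r s t n
      = (r-s+t+1) * (r+s+t-1) * W (2*n+3) := by
  have h₄ : W (2*n+4) = r * W (2*n+3) + s * W (2*n+2) + t * W (2*n+1) := hrec (2*n+1)
  have h₃ : W (2*n+3) = r * W (2*n+2) + s * W (2*n+1) + t * W (2*n) := hrec (2*n)
  rw [oddSumPotential, oddSumPotential, show 2*(n+1)+2 = 2*n+4 by ring,
    show 2*(n+1)+1 = 2*n+3 by ring, show 2*(n+1) = 2*n+2 by ring]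
  linear_combination (r+t) * h₄ + (1 - s) * h₃

theorem mul_sum_range_odd (hrec : ∀ n, W (n+3) = r * W (n+2) + s * W (n+1) + t * W n)
    (n : ℕ) :
    (r-s+t+1) * (r+s+t-1) * ∑ k ∈ range (n+1), W (2*k+1)
      = (r-s+t+1) * (r+s+t-1) * W 1 + oddSumPotential W r s t n - oddSumPotential W r s t 0 := by
  have htel := sum_range_sub (oddSumPotential W r s t) n
  simp only [oddSumPotential_succ_sub W r s t hrec, ← mul_sum] at htel
  have hsplit : ∑ k ∈ range (n+1), W (2*k+1) = W 1 + ∑ k ∈ range n, W (2*k+3) := by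
    rw [sum_range_succ', add_comm]
    rfl
  rw [hsplit]
  linear_combination htel

end GenTribonacci

theorem sum_gen_tribonacci_odd (W : ℕ → ℂ) (r s t : ℂ)
    (hrec : ∀ n, 3 ≤ n → W n = r * W (n-1) + s * W (n-2) + t * W (n-3))
    (h : (r+s+t-1) * (r-s+t+1) ≠ 0) :
    ∀ n : ℕ, ∑ k ∈ Finset.range (n+1), W (2*k+1) =
      ((r+t) * W (2*n+2) + (s - s^2 + t^2 + r*t) * W (2*n+1) + (t - s*t) * W (2*n)
        + (-r-t) * W 2 + (r^2 + r*t + s - 1) * W 1 + (s*t - t) * W 0)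
      / ((r-s+t+1) * (r+s+t-1)) := by
  have hrec' : ∀ n, W (n+3) = r * W (n+2) + s * W (n+1) + t * W n := fun n ↦ by
    simpa using hrec (n+3) (by omega)
  intro n
  rw [eq_div_iff (by rwa [mul_comm]), mul_comm,
    GenTribonacci.mul_sum_range_odd W r s t hrec', GenTribonacci.oddSumPotential,
    GenTribonacci.oddSumPotential]
  ring
end

section
/- Let W satisfy W(n) = r·W(n-1) + W(n-2) + t·W(n-3) for n ≥ 3 (i.e., s = 1), with r + t ≠ 0. Then for all n ≥ 0, ∑_{k=0}^{n} W(2k) = (W(2n+1) + t·W(2n) - W(1) + r·W(0)) / (r+t) and ∑_{k=0}^{n} W(2k+1) = (W(2n+2) + t·W(2n+1) - W(2) + r·W(1)) / (r+t). -/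
/-! The recurrence with middle coefficient `1` rearranges to
`(r + t) W(m+2) = (W(m+3) + t W(m+2)) - (W(m+1) + t W(m))`,
so `(r + t)` times a sum over every second index telescopes. -/

section Recurrence

variable {R : Type*} [CommRing R] {u : ℕ → R} {r t : R}

theorem sum_range_even_mul_eq_of_recurrence
    (hu : ∀ m, u (m + 3) = r * u (m + 2) + u (m + 1) + t * u m) (n : ℕ) :
    (∑ k ∈ Finset.range (n + 1), u (2 * k)) * (r + t) =
      u (2 * n + 1) + t * u (2 * n) - u 1 + r * u 0 := by
  induction n with
  | zero => rw [Finset.sum_range_one]; ring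
  | succ n ih =>
    rw [Finset.sum_range_succ, add_mul, ih, show 2 * (n + 1) + 1 = 2 * n + 3 by ring,
      show 2 * (n + 1) = 2 * n + 2 by ring]
    linear_combination -hu (2 * n)

theorem sum_range_odd_mul_eq_of_recurrence
    (hu : ∀ m, u (m + 3) = r * u (m + 2) + u (m + 1) + t * u m) (n : ℕ) :
    (∑ k ∈ Finset.range (n + 1), u (2 * k + 1)) * (r + t) =
      u (2 * n + 2) + t * u (2 * n + 1) - u 2 + r * u 1 :=
  sum_range_even_mul_eq_of_recurrence (u := fun m => u (m + 1)) (fun m => hu (m + 1)) n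

end Recurrence

theorem sum_gen_tribonacci_s_eq_one (W : ℕ → ℂ) (r t : ℂ)
    (hrec : ∀ n, 3 ≤ n → W n = r * W (n-1) + W (n-2) + t * W (n-3))
    (h : r + t ≠ 0) :
    ∀ n : ℕ,
      (∑ k ∈ Finset.range (n+1), W (2*k) =
        (W (2*n+1) + t * W (2*n) - W 1 + r * W 0) / (r+t)) ∧
      (∑ k ∈ Finset.range (n+1), W (2*k+1) =
        (W (2*n+2) + t * W (2*n+1) - W 2 + r * W 1) / (r+t)) := by
  have hW : ∀ m, W (m + 3) = r * W (m + 2) + W (m + 1) + t * W m := fun m =>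
    hrec (m + 3) (by omega)
  intro n
  rw [eq_div_iff h, eq_div_iff h]
  exact ⟨sum_range_even_mul_eq_of_recurrence hW n, sum_range_odd_mul_eq_of_recurrence hW n⟩
end

section
/- For the Tribonacci numbers T, for all n ≥ 0: ∑_{k=0}^{n} T(2k) = (T(2n+1) + T(2n) - 1)/2 and ∑_{k=0}^{n} T(2k+1) = (T(2n+2) + T(2n+1))/2. -/
/-!
Telescoping: the recurrence at `2n + m` says `2 T(2n+m+2) = (T(2n+m+3) + T(2n+m+2)) - (T(2n+m+1) + T(2n+m))`,
so twice the sum of every other term is the sum of two consecutive terms, up to a constant read off at `n = 0`.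
Halving in `ℕ` then gives both formulas, with the constants `T 1 - T 0 = 1` and `T 2 - T 1 = 0`.
-/

open Finset

theorem two_nsmul_sum_range_add_of_tribonacci {M : Type*} [AddCommMonoid M] (T : ℕ → M)
    (hrec : ∀ n, T (n + 3) = T (n + 2) + T (n + 1) + T n) (m n : ℕ) :
    2 • ∑ k ∈ range (n + 1), T (2 * k + m) + T (m + 1) = T (2 * n + m + 1) + T (2 * n + m) + T m := by
  induction n with
  | zero => simp only [zero_add, range_one, sum_singleton, mul_zero, two_nsmul]; abel
  | succ n ih =>
    have hstep := hrec (2 * n + m)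
    rw [show 2 * n + m + 3 = 2 * (n + 1) + m + 1 by ring,
      show 2 * n + m + 2 = 2 * (n + 1) + m by ring] at hstep
    rw [sum_range_succ, nsmul_add, add_right_comm, ih, hstep, two_nsmul]
    abel

theorem sum_tribonacci_even_odd (T : ℕ → ℕ) (h0 : T 0 = 0) (h1 : T 1 = 1) (h2 : T 2 = 1)
    (hrec : ∀ n, 3 ≤ n → T n = T (n-1) + T (n-2) + T (n-3)) :
    ∀ n : ℕ,
      (∑ k ∈ Finset.range (n+1), T (2*k) = (T (2*n+1) + T (2*n) - 1) / 2) ∧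
      (∑ k ∈ Finset.range (n+1), T (2*k+1) = (T (2*n+2) + T (2*n+1)) / 2) := by
  have hrec' : ∀ n, T (n + 3) = T (n + 2) + T (n + 1) + T n := fun n => hrec (n + 3) (by omega)
  intro n
  have heven := two_nsmul_sum_range_add_of_tribonacci T hrec' 0 n
  have hodd := two_nsmul_sum_range_add_of_tribonacci T hrec' 1 n
  simp only [add_zero, smul_eq_mul] at heven hodd
  rw [h0, h1] at heven
  rw [h1, h2, show 2 * n + 1 + 1 = 2 * n + 2 by ring] at hodd
  omega
end

section
/- For the third-order Pell numbers P, for all n ≥ 0: ∑_{k=0}^{n} P(2k) = (P(2n+1) + P(2n) - 1)/3 and ∑_{k=0}^{n} P(2k+1) = (P(2n+2) + P(2n+1))/3. -/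
/-!
Adding `u (m+2)` to both sides of the recurrence `u (m+3) = 2 u (m+2) + u (m+1) + u m` gives
`u (m+3) + u (m+2) = (u (m+1) + u m) + 3 u (m+2)`, so the sums of consecutive terms telescope over every second index. With `P 0 = 0`, `P 1 = 1`,
`P 2 = 2` the boundary terms are `1` for the even sum and `0` for the odd one.
-/

open Finset

theorem three_mul_sum_range_step_two_of_rec {R : Type*} [CommSemiring R] {u : ℕ → R}
    (hrec : ∀ m, u (m + 3) = 2 * u (m + 2) + u (m + 1) + u m) (r n : ℕ) :
    3 * ∑ k ∈ range n, u (2 * (k + 1) + r) + (u (r + 1) + u r) =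
      u (2 * n + r + 1) + u (2 * n + r) := by
  induction n with
  | zero => simp
  | succ n ih =>
    rw [sum_range_succ, mul_add, add_right_comm, ih,
      show 2 * (n + 1) + r + 1 = 2 * n + r + 3 by ring, hrec,
      show 2 * (n + 1) + r = 2 * n + r + 2 by ring]
    ring

theorem sum_third_order_pell_even_odd (P : ℕ → ℕ) (h0 : P 0 = 0) (h1 : P 1 = 1) (h2 : P 2 = 2)
    (hrec : ∀ n, 3 ≤ n → P n = 2 * P (n-1) + P (n-2) + P (n-3)) :
    ∀ n : ℕ,
      (∑ k ∈ Finset.range (n+1), P (2*k) = (P (2*n+1) + P (2*n) - 1) / 3) ∧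
      (∑ k ∈ Finset.range (n+1), P (2*k+1) = (P (2*n+2) + P (2*n+1)) / 3) := by
  have hrec' : ∀ m, P (m + 3) = 2 * P (m + 2) + P (m + 1) + P m := fun m => by
    simpa using hrec (m + 3) (by omega)
  intro n
  have heven := three_mul_sum_range_step_two_of_rec hrec' 0 n
  have hodd := three_mul_sum_range_step_two_of_rec hrec' 1 n
  simp only [add_zero, zero_add, h0, h1] at heven
  simp only [Nat.reduceAdd, h1, h2, show 2 * n + 1 + 1 = 2 * n + 2 from rfl] at hodd
  rw [sum_range_succ', sum_range_succ', mul_zero, h0, zero_add, h1]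
  omega
end

section
/- Let W satisfy W(n) = 2·W(n-2) + W(n-3) for n ≥ 3. Then for all n ≥ 0: ∑_{k=0}^{n} W(2k) = W(2n+1) + (W(2)-W(1)-W(0))·n + W(0) - W(1), and ∑_{k=0}^{n} W(2k+1) = (W(2n+3) + W(2n+2) - W(2n+1) + 2n·(W(1)+W(0)-W(2)) - W(2) + W(1) - W(0))/2. -/
/-!
Since `x³ - 2x - 1 = (x + 1)(x² - x - 1)`, the defect `W (n+2) - W (n+1) - W n` of `W` as a
Fibonacci-type sequence is multiplied by `-1` at each step, so it equals `(-1)ⁿ c` with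
`c = W 2 - W 1 - W 0`. Read at even and odd indices this gives `W (2k+2) - W (2k) = W (2k+1) + c`
and `W (2k+3) - W (2k+1) = W (2k+2) - c`, and both sums telescope.
-/

open Finset

section PellPadovan

variable {R : Type*} [CommRing R] {W : ℕ → R}

theorem pellPadovan_sub_sub_eq (hW : ∀ n, W (n + 3) = 2 * W (n + 1) + W n) (n : ℕ) :
    W (n + 2) - W (n + 1) - W n = (-1) ^ n * (W 2 - W 1 - W 0) := by
  induction n with
  | zero => ring
  | succ n ih =>
    rw [pow_succ, mul_neg_one, neg_mul, ← ih, hW]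
    ring

theorem pellPadovan_sub_sub_even (hW : ∀ n, W (n + 3) = 2 * W (n + 1) + W n) (k : ℕ) :
    W (2 * k + 2) - W (2 * k + 1) - W (2 * k) = W 2 - W 1 - W 0 := by
  rw [pellPadovan_sub_sub_eq hW, pow_mul, neg_one_sq, one_pow, one_mul]

theorem pellPadovan_sub_sub_odd (hW : ∀ n, W (n + 3) = 2 * W (n + 1) + W n) (k : ℕ) :
    W (2 * k + 3) - W (2 * k + 2) - W (2 * k + 1) = -(W 2 - W 1 - W 0) := by
  rw [pellPadovan_sub_sub_eq hW (2 * k + 1), pow_succ, pow_mul, neg_one_sq, one_pow, one_mul,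
    neg_one_mul]

theorem pellPadovan_sum_range_odd (hW : ∀ n, W (n + 3) = 2 * W (n + 1) + W n) (n : ℕ) :
    ∑ k ∈ range (n + 1), W (2 * k + 1) = W (2 * n + 2) - W 0 - (n + 1) * (W 2 - W 1 - W 0) := by
  have step (k : ℕ) : W (2 * k + 1) = (W (2 * (k + 1)) - W (2 * k)) - (W 2 - W 1 - W 0) := by
    rw [mul_add_one]
    linear_combination -pellPadovan_sub_sub_even hW k
  rw [sum_congr rfl fun k _ => step k, sum_sub_distrib, sum_range_sub (fun k => W (2 * k)),
    sum_const, card_range, nsmul_eq_mul, Nat.cast_add_one, mul_add_one 2 n]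

theorem pellPadovan_sum_range_even (hW : ∀ n, W (n + 3) = 2 * W (n + 1) + W n) (n : ℕ) :
    ∑ k ∈ range (n + 1), W (2 * k) = W (2 * n + 1) - W 1 + W 0 + n * (W 2 - W 1 - W 0) := by
  have step (k : ℕ) :
      W (2 * (k + 1)) = (W (2 * (k + 1) + 1) - W (2 * k + 1)) + (W 2 - W 1 - W 0) := by
    rw [mul_add_one]
    linear_combination -pellPadovan_sub_sub_odd hW k
  rw [sum_range_succ', sum_congr rfl fun k _ => step k, sum_add_distrib,
    sum_range_sub (fun k => W (2 * k + 1)), sum_const, card_range, nsmul_eq_mul]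
  ring

end PellPadovan

theorem sum_pell_padovan_type (W : ℕ → ℂ)
    (hrec : ∀ n, 3 ≤ n → W n = 2 * W (n-2) + W (n-3)) :
    ∀ n : ℕ,
      (∑ k ∈ Finset.range (n+1), W (2*k) =
        W (2*n+1) + (W 2 - W 1 - W 0) * (n : ℂ) + W 0 - W 1) ∧
      (∑ k ∈ Finset.range (n+1), W (2*k+1) =
        (W (2*n+3) + W (2*n+2) - W (2*n+1)
          + 2 * (n : ℂ) * (W 1 + W 0 - W 2) - W 2 + W 1 - W 0) / 2) := by
  have hW (n : ℕ) : W (n + 3) = 2 * W (n + 1) + W n := by simpa using hrec (n + 3) (by omega)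
  intro n
  refine ⟨by rw [pellPadovan_sum_range_even hW]; ring, ?_⟩
  rw [pellPadovan_sum_range_odd hW, eq_div_iff two_ne_zero]
  linear_combination -pellPadovan_sub_sub_odd hW n
end

section
/- For the Pell-Padovan numbers R (R(0)=1, R(1)=1, R(2)=1, R(n)=2R(n-2)+R(n-3)), for all n ≥ 0: ∑_{k=0}^{n} R(k) = (R(n+3)+R(n+2)-R(n+1)-1)/2, ∑_{k=0}^{n} R(2k) = R(2n+1) - n, and ∑_{k=0}^{n} R(2k+1) = (R(2n+3)+R(2n+2)-R(2n+1)+2n-1)/2. -/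
/-!
The recurrence `R (n + 3) = 2 * R (n + 1) + R n` makes the defect `R n + R (n + 1) - R (n + 2)`
alternate in sign; for the Pell-Padovan initial values it is `(-1) ^ n`. Hence
`R (2n + 3) - R (2n + 1) = R (2n + 2) + 1` and `R (2n + 4) - R (2n + 2) = R (2n + 3) - 1`,
so both partial sums telescope. The full sum telescopes for any solution of the recurrence,
since `R (n + 3) + R (n + 2) - R (n + 1)` grows by `2 * R (n + 1)`.
-/

open Finset

section Recurrence

variable {R : ℕ → ℕ}

theorem two_mul_sum_range_add_eq (hrec : ∀ n, R (n + 3) = 2 * R (n + 1) + R n) (n : ℕ) :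
    2 * ∑ k ∈ range (n + 1), R k + R (n + 1) + R 1 + R 2 = R (n + 3) + R (n + 2) + R 0 := by
  induction n with
  | zero => simp [hrec 0]; ring
  | succ n ih =>
    rw [sum_range_succ]
    show _ + R (n + 2) + _ + _ = R (n + 4) + R (n + 3) + _
    have : R (n + 4) = 2 * R (n + 2) + R (n + 1) := hrec (n + 1)
    omega

theorem add_succ_add_eq_of_add_succ_eq (hrec : ∀ n, R (n + 3) = 2 * R (n + 1) + R n) {m c : ℕ}
    (h : R m + R (m + 1) = R (m + 2) + c) : R (m + 1) + R (m + 2) + c = R (m + 3) := by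
  have := hrec m
  omega

theorem add_succ_eq_of_add_succ_add_eq (hrec : ∀ n, R (n + 3) = 2 * R (n + 1) + R n) {m c : ℕ}
    (h : R m + R (m + 1) + c = R (m + 2)) : R (m + 1) + R (m + 2) = R (m + 3) + c := by
  have := hrec m
  omega

theorem even_add_succ_eq (hrec : ∀ n, R (n + 3) = 2 * R (n + 1) + R n)
    (hbase : R 0 + R 1 = R 2 + 1) (n : ℕ) : R (2 * n) + R (2 * n + 1) = R (2 * n + 2) + 1 := by
  induction n with
  | zero => exact hbase
  | succ n ih =>
    exact add_succ_eq_of_add_succ_add_eq hrec (m := 2 * n + 1)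
      (add_succ_add_eq_of_add_succ_eq hrec ih)

theorem odd_add_succ_add_one_eq (hrec : ∀ n, R (n + 3) = 2 * R (n + 1) + R n)
    (hbase : R 0 + R 1 = R 2 + 1) (n : ℕ) : R (2 * n + 1) + R (2 * n + 2) + 1 = R (2 * n + 3) :=
  add_succ_add_eq_of_add_succ_eq hrec (even_add_succ_eq hrec hbase n)

theorem sum_range_even_add_eq (hodd : ∀ n, R (2 * n + 1) + R (2 * n + 2) + 1 = R (2 * n + 3))
    (h01 : R 0 = R 1) (n : ℕ) : ∑ k ∈ range (n + 1), R (2 * k) + n = R (2 * n + 1) := by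
  induction n with
  | zero => simpa using h01
  | succ n ih =>
    rw [sum_range_succ]
    have := hodd n
    grind

theorem sum_range_odd_eq (heven : ∀ n, R (2 * n) + R (2 * n + 1) = R (2 * n + 2) + 1)
    (h12 : R 1 = R 2) (n : ℕ) : ∑ k ∈ range (n + 1), R (2 * k + 1) = R (2 * n + 2) + n := by
  induction n with
  | zero => simpa using h12
  | succ n ih =>
    rw [sum_range_succ]
    have := heven (n + 1)
    grind

end Recurrence

theorem sum_pell_padovan (R : ℕ → ℕ) (h0 : R 0 = 1) (h1 : R 1 = 1) (h2 : R 2 = 1)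
    (hrec : ∀ n, 3 ≤ n → R n = 2 * R (n-2) + R (n-3)) :
    ∀ n : ℕ,
      (∑ k ∈ Finset.range (n+1), R k = (R (n+3) + R (n+2) - R (n+1) - 1) / 2) ∧
      (∑ k ∈ Finset.range (n+1), R (2*k) = R (2*n+1) - n) ∧
      (∑ k ∈ Finset.range (n+1), R (2*k+1) = (R (2*n+3) + R (2*n+2) - R (2*n+1) + 2*n - 1) / 2) := by
  have hrec' : ∀ n, R (n + 3) = 2 * R (n + 1) + R n := fun n => hrec (n + 3) (by omega)
  have hbase : R 0 + R 1 = R 2 + 1 := by omega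
  intro n
  have hsum := two_mul_sum_range_add_eq hrec' n
  have heven := sum_range_even_add_eq (odd_add_succ_add_one_eq hrec' hbase) (by omega) n
  have hodd := sum_range_odd_eq (even_add_succ_eq hrec' hbase) (by omega) n
  have hstep := odd_add_succ_add_one_eq hrec' hbase n
  refine ⟨by omega, by omega, by omega⟩
end

section
/- For the Narayana numbers N (N(0)=0, N(1)=1, N(2)=1, N(n)=N(n-1)+N(n-3)), for all n ≥ 0: ∑_{k=0}^{n} N(k) = N(n+3) - 1, ∑_{k=0}^{n} N(2k) = (N(2n+2)+N(2n+1)+2N(2n)-2)/3, and ∑_{k=0}^{n} N(2k+1) = (2N(2n+2)+2N(2n+1)+N(2n)-1)/3. -/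
/-!
Everything holds for any sequence with `N (m + 3) = N (m + 2) + N m`: the recurrence says
`N (m + 3) - N (m + 2) = N m`, so the plain sum telescopes, and using it twice shows that the
right-hand sides of the even and odd formulas grow by exactly `3 N (2n + 2)` and `3 N (2n + 3)`
from `n` to `n + 1`. The initial values only fix the constants.
-/

open Finset

section NarayanaRecurrence

variable {M : Type*} [AddCommMonoid M] {N : ℕ → M} (hN : ∀ m, N (m + 3) = N (m + 2) + N m)
include hN

theorem sum_range_add_eq_of_narayana_rec (n : ℕ) :
    ∑ k ∈ range n, N k + N 2 = N (n + 2) := by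
  induction n with
  | zero => simp
  | succ n ih => rw [sum_range_succ, add_right_comm, ih, hN, add_comm]

theorem three_smul_sum_even_add_eq_of_narayana_rec (n : ℕ) :
    3 • ∑ k ∈ range (n + 1), N (2 * k) + (N 2 + N 1) =
      N (2 * n + 2) + N (2 * n + 1) + 2 • N (2 * n) + N 0 := by
  induction n with
  | zero => simp only [zero_add, range_one, sum_singleton, mul_zero]; abel
  | succ n ih =>
    have h₄ : N (2 * n + 4) = N (2 * n + 3) + N (2 * n + 1) := hN (2 * n + 1)
    have h₃ : N (2 * n + 3) = N (2 * n + 2) + N (2 * n) := hN (2 * n)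
    rw [sum_range_succ, smul_add, add_right_comm, ih, show 2 * (n + 1) = 2 * n + 2 by ring,
      show 2 * n + 2 + 2 = 2 * n + 4 by ring, show 2 * n + 2 + 1 = 2 * n + 3 by ring, h₄, h₃]
    abel

theorem three_smul_sum_odd_add_eq_of_narayana_rec (n : ℕ) :
    3 • ∑ k ∈ range (n + 1), N (2 * k + 1) + (2 • N 2 + N 0) =
      2 • N (2 * n + 2) + 2 • N (2 * n + 1) + N (2 * n) + N 1 := by
  induction n with
  | zero => simp only [zero_add, range_one, sum_singleton, mul_zero]; abel
  | succ n ih =>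
    have h₅ : N (2 * n + 5) = N (2 * n + 4) + N (2 * n + 2) := hN (2 * n + 2)
    have h₄ : N (2 * n + 4) = N (2 * n + 3) + N (2 * n + 1) := hN (2 * n + 1)
    have h₃ : N (2 * n + 3) = N (2 * n + 2) + N (2 * n) := hN (2 * n)
    rw [sum_range_succ, smul_add, add_right_comm, ih, show 2 * (n + 1) = 2 * n + 2 by ring,
      show 2 * n + 2 + 2 = 2 * n + 4 by ring, show 2 * n + 2 + 1 = 2 * n + 3 by ring, h₄, h₃]
    abel

end NarayanaRecurrence

theorem sum_narayana (N : ℕ → ℕ) (h0 : N 0 = 0) (h1 : N 1 = 1) (h2 : N 2 = 1)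
    (hrec : ∀ n, 3 ≤ n → N n = N (n-1) + N (n-3)) :
    ∀ n : ℕ,
      (∑ k ∈ Finset.range (n+1), N k = N (n+3) - 1) ∧
      (∑ k ∈ Finset.range (n+1), N (2*k) = (N (2*n+2) + N (2*n+1) + 2 * N (2*n) - 2) / 3) ∧
      (∑ k ∈ Finset.range (n+1), N (2*k+1) = (2 * N (2*n+2) + 2 * N (2*n+1) + N (2*n) - 1) / 3) := by
  have hN : ∀ m, N (m + 3) = N (m + 2) + N m := fun m => hrec (m + 3) (by omega)
  intro n
  have hall : ∑ k ∈ range (n + 1), N k + N 2 = N (n + 3) :=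
    sum_range_add_eq_of_narayana_rec hN (n + 1)
  have heven := three_smul_sum_even_add_eq_of_narayana_rec hN n
  have hodd := three_smul_sum_odd_add_eq_of_narayana_rec hN n
  simp only [smul_eq_mul, h0, h1, h2] at hall heven hodd
  omega
end

section
/- For the third order Jacobsthal numbers J (J(0)=0, J(1)=1, J(2)=1, J(n)=J(n-1)+J(n-2)+2J(n-3)), for all n ≥ 0: ∑_{k=0}^{n} J(k) = (J(n+3)-J(n+1)-1)/3, ∑_{k=0}^{n} J(2k) = (J(2n+1)+2J(2n)-1)/3, and ∑_{k=0}^{n} J(2k+1) = (J(2n+2)+2J(2n+1))/3. -/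
/-!
For a solution of `J (n + 3) = J (n + 2) + J (n + 1) + 2 * J n`, each of the three identities,
written without subtraction or division, is a telescoping sum: the increment of its left side
is the increment of its right side plus `J (m + 3) - J (m + 2) - J (m + 1) - 2 * J m = 0`.
The odd-index sums are the even-index sums of the shifted sequence `fun n ↦ J (n + 1)`.
-/

open Finset

section Recurrence

variable {R : Type*} [CommSemiring R] {J : ℕ → R}

theorem jacobsthal_sum_range
    (hJ : ∀ n, J (n + 3) = J (n + 2) + J (n + 1) + 2 * J n) (n : ℕ) :
    J (n + 3) + J 0 = 3 * ∑ k ∈ range (n + 1), J k + J (n + 1) + J 2 := by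
  induction n with
  | zero => simp only [zero_add, range_one, sum_singleton, hJ 0]; ring
  | succ m ih =>
    calc J (m + 4) + J 0 = (J (m + 3) + J 0) + J (m + 2) + 2 * J (m + 1) := by
          rw [hJ (m + 1)]; ring
      _ = 3 * ∑ k ∈ range (m + 2), J k + J (m + 2) + J 2 := by
          rw [ih, sum_range_succ _ (m + 1)]; ring

theorem jacobsthal_sum_range_even
    (hJ : ∀ n, J (n + 3) = J (n + 2) + J (n + 1) + 2 * J n) (n : ℕ) :
    J (2 * n + 1) + 2 * J (2 * n) + J 0 = 3 * ∑ k ∈ range (n + 1), J (2 * k) + J 1 := by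
  induction n with
  | zero => simp only [mul_zero, zero_add, range_one, sum_singleton]; ring
  | succ m ih =>
    calc J (2 * m + 3) + 2 * J (2 * m + 2) + J 0
        = (J (2 * m + 1) + 2 * J (2 * m) + J 0) + 3 * J (2 * m + 2) := by
          rw [hJ (2 * m)]; ring
      _ = 3 * ∑ k ∈ range (m + 2), J (2 * k) + J 1 := by
          rw [ih, sum_range_succ _ (m + 1), mul_add_one 2 m]; ring

theorem jacobsthal_sum_range_odd
    (hJ : ∀ n, J (n + 3) = J (n + 2) + J (n + 1) + 2 * J n) (n : ℕ) :
    J (2 * n + 2) + 2 * J (2 * n + 1) + J 1 = 3 * ∑ k ∈ range (n + 1), J (2 * k + 1) + J 2 :=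
  jacobsthal_sum_range_even (J := fun n ↦ J (n + 1)) (fun n ↦ hJ (n + 1)) n

end Recurrence

theorem sum_third_order_jacobsthal (J : ℕ → ℕ) (h0 : J 0 = 0) (h1 : J 1 = 1) (h2 : J 2 = 1)
    (hrec : ∀ n, 3 ≤ n → J n = J (n-1) + J (n-2) + 2 * J (n-3)) :
    ∀ n : ℕ,
      (∑ k ∈ Finset.range (n+1), J k = (J (n+3) - J (n+1) - 1) / 3) ∧
      (∑ k ∈ Finset.range (n+1), J (2*k) = (J (2*n+1) + 2 * J (2*n) - 1) / 3) ∧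
      (∑ k ∈ Finset.range (n+1), J (2*k+1) = (J (2*n+2) + 2 * J (2*n+1)) / 3) := by
  have hJ : ∀ n, J (n + 3) = J (n + 2) + J (n + 1) + 2 * J n := fun n ↦ hrec (n + 3) le_add_self
  intro n
  have hall := jacobsthal_sum_range hJ n
  have heven := jacobsthal_sum_range_even hJ n
  have hodd := jacobsthal_sum_range_odd hJ n
  rw [h0, h1, h2] at *
  omega
end

section
/- Let W : ℤ → ℂ satisfy W(n) = r·W(n-1) + s·W(n-2) + t·W(n-3) for all integers n, with t ≠ 0 and r+s+t-1 ≠ 0. Then for all n ≥ 1, ∑_{k=1}^{n} W(-k) = (-(r+s+t)·W(-n-1) - (s+t)·W(-n-2) - t·W(-n-3) + W(2) + (1-r)·W(1) + (1-r-s)·W(0)) / (r+s+t-1). -/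
/-!
With `c = r + s + t - 1`, the recurrence makes `c • W` a discrete derivative:
`P (m + 1) - P m = c * W m` for `P m = (r+s+t) W(m-1) + (s+t) W(m-2) + t W(m-3)`.
Summing over `m = -n, …, -1` telescopes to `P 0 - P (-n)`, and three more uses of the
recurrence rewrite `P 0` as `W 2 + (1-r) W 1 + (1-r-s) W 0`.
-/

namespace GenTribonacci

variable {R : Type*} [CommRing R]

def potential (W : ℤ → R) (r s t : R) (m : ℤ) : R :=
  (r + s + t) * W (m - 1) + (s + t) * W (m - 2) + t * W (m - 3)

variable {W : ℤ → R} {r s t : R}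

theorem potential_succ_sub (hrec : ∀ n : ℤ, W n = r * W (n - 1) + s * W (n - 2) + t * W (n - 3))
    (m : ℤ) : potential W r s t (m + 1) - potential W r s t m = (r + s + t - 1) * W m := by
  have e := hrec m
  simp only [potential, add_sub_cancel_right]
  ring_nf at e ⊢
  linear_combination e

theorem potential_eq (hrec : ∀ n : ℤ, W n = r * W (n - 1) + s * W (n - 2) + t * W (n - 3))
    (m : ℤ) : potential W r s t m = W (m + 2) + (1 - r) * W (m + 1) + (1 - r - s) * W m := by
  have e₂ := hrec (m + 2)
  have e₁ := hrec (m + 1)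
  have e₀ := hrec m
  simp only [potential]
  ring_nf at e₂ e₁ e₀ ⊢
  linear_combination -e₂ - e₁ - e₀

theorem mul_sum_Icc_neg (hrec : ∀ n : ℤ, W n = r * W (n - 1) + s * W (n - 2) + t * W (n - 3))
    (n : ℕ) : (r + s + t - 1) * ∑ k ∈ Finset.Icc 1 n, W (-(k : ℤ)) =
      potential W r s t 0 - potential W r s t (-(n : ℤ)) := by
  induction n with
  | zero => simp
  | succ n ih =>
    rw [Finset.sum_Icc_succ_top (by omega), mul_add, ih, ← potential_succ_sub hrec]
    push_cast
    ring_nf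

end GenTribonacci

open GenTribonacci in
theorem sum_gen_tribonacci_neg_general (W : ℤ → ℂ) (r s t : ℂ)
    (hrec : ∀ n : ℤ, W n = r * W (n-1) + s * W (n-2) + t * W (n-3))
    (h : r + s + t - 1 ≠ 0) :
    ∀ n : ℕ, 1 ≤ n →
      ∑ k ∈ Finset.Icc 1 n, W (-(k : ℤ)) =
        (-(r+s+t) * W (-(n : ℤ)-1) - (s+t) * W (-(n : ℤ)-2) - t * W (-(n : ℤ)-3)
          + W 2 + (1-r) * W 1 + (1-r-s) * W 0) / (r+s+t-1) := by
  intro n _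
  rw [eq_div_iff h, mul_comm, mul_sum_Icc_neg hrec, potential_eq hrec, potential]
  norm_num
  ring

theorem sum_gen_tribonacci_neg (W : ℤ → ℂ) (r s t : ℂ)
    (hrec : ∀ n : ℤ, W n = r * W (n-1) + s * W (n-2) + t * W (n-3))
    (ht : t ≠ 0) (h : r + s + t - 1 ≠ 0) :
    ∀ n : ℕ, 1 ≤ n →
      ∑ k ∈ Finset.Icc 1 n, W (-(k : ℤ)) =
        (-(r+s+t) * W (-(n : ℤ)-1) - (s+t) * W (-(n : ℤ)-2) - t * W (-(n : ℤ)-3)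
          + W 2 + (1-r) * W 1 + (1-r-s) * W 0) / (r+s+t-1) :=
  sum_gen_tribonacci_neg_general W r s t hrec h
end
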